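/- Let 0 < q ≤ 2, f, g continuous nondecreasing with f positive and g ≤ 0, and h(t) = (g⁻(t)/f(t))^{2/q} f(t). Then for all t ≥ a: (q/2) ∫_a^t f(s) ds ≤ (∫_a^t e^{-2∫_s^t h(r) dr} f(s) ds) · [ 1 + q (∫_a^t g⁻(s) ds)^{2/q} / (∫_a^t f(s) ds)^{2/q - 1} ]. -/

import Mathlib

open Real MeasureTheory Set Filter

/-!
Write `u = g⁻`, `p = 2/q ≥ 1`, `F, G` for the primitives of `f, u` from `a`, and `ψ` for the
weighted integral on the right, the solution of `ψ' = f - 2hψ`, `ψ(a) = 0`. Since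
`h = (u/f)^(p-1) u`, the function `Φ = ψ (p F^(p-1) + 2 G^p) - F^p` vanishes at `a` and has
derivative `2pψ (u G^(p-1) - h F^(p-1)) + 2 (f - 2hψ) G^p + p(p-1) ψ F^(p-2) f ≥ 0`: `2hψ ≤ f`
because `h` decreases and `f` increases, and `h F^(p-1) ≤ u G^(p-1)` follows from the
Chebyshev-type bound `u(s) F(s) ≤ f(s) G(s)`. Dividing `Φ(t) ≥ 0` by `F^(p-1)` gives the claim.
-/

lemma div_rpow_mul_eq_div_rpow_sub_one_mul {x y : ℝ} (p : ℝ) (hx : 0 ≤ x) (hy : 0 < y)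
    (hp : 0 < p) : (x / y) ^ p * y = (x / y) ^ (p - 1) * x := by
  rcases hx.eq_or_lt with rfl | hx
  · simp [zero_rpow hp.ne']
  rw [rpow_sub_one (div_pos hx hy).ne']
  field_simp

lemma antitone_div_rpow_mul {u v : ℝ → ℝ} {r : ℝ} (hr : 0 ≤ r) (hu0 : ∀ s, 0 ≤ u s)
    (hu : Antitone u) (hv0 : ∀ s, 0 < v s) (hv : Monotone v) :
    Antitone fun s => (u s / v s) ^ r * u s := by
  intro s s' hss'
  have hdiv : u s' / v s' ≤ u s / v s := div_le_div₀ (hu0 s) (hu hss') (hv0 s) (hv hss')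
  exact mul_le_mul (rpow_le_rpow (div_nonneg (hu0 s') (hv0 s').le) hdiv hr) (hu hss') (hu0 s')
    (rpow_nonneg (div_nonneg (hu0 s) (hv0 s).le) _)

lemma mul_integral_le_mul_integral_of_antitone_of_monotone {u v : ℝ → ℝ} {a s : ℝ}
    (has : a ≤ s) (hu0 : ∀ x, 0 ≤ u x) (hu : Antitone u) (hv0 : ∀ x, 0 ≤ v x) (hv : Monotone v)
    (hui : IntervalIntegrable u volume a s) (hvi : IntervalIntegrable v volume a s) :
    u s * ∫ x in a..s, v x ≤ v s * ∫ x in a..s, u x := by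
  rw [← intervalIntegral.integral_const_mul, ← intervalIntegral.integral_const_mul]
  refine intervalIntegral.integral_mono_on has (hvi.const_mul _) (hui.const_mul _) fun x hx => ?_
  calc u s * v x ≤ u x * v x := mul_le_mul_of_nonneg_right (hu hx.2) (hv0 x)
    _ ≤ u x * v s := mul_le_mul_of_nonneg_left (hv hx.2) (hu0 x)
    _ = v s * u x := mul_comm _ _

lemma div_rpow_mul_mul_integral_rpow_le {u v : ℝ → ℝ} {a s r : ℝ} (has : a ≤ s) (hr : 0 ≤ r)
    (hu0 : ∀ x, 0 ≤ u x) (hu : Antitone u) (hv0 : ∀ x, 0 < v x) (hv : Monotone v)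
    (hui : IntervalIntegrable u volume a s) (hvi : IntervalIntegrable v volume a s) :
    (u s / v s) ^ r * u s * (∫ x in a..s, v x) ^ r ≤ u s * (∫ x in a..s, u x) ^ r := by
  have hV : 0 ≤ ∫ x in a..s, v x := intervalIntegral.integral_nonneg has fun x _ => (hv0 x).le
  have hratio0 : 0 ≤ u s / v s := div_nonneg (hu0 s) (hv0 s).le
  have hratio : u s / v s * ∫ x in a..s, v x ≤ ∫ x in a..s, u x := by
    rw [div_mul_eq_mul_div, div_le_iff₀ (hv0 s), mul_comm (∫ x in a..s, u x)]
    exact mul_integral_le_mul_integral_of_antitone_of_monotone has hu0 hu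
      (fun x => (hv0 x).le) hv hui hvi
  calc (u s / v s) ^ r * u s * (∫ x in a..s, v x) ^ r
      = u s * (u s / v s * ∫ x in a..s, v x) ^ r := by rw [mul_rpow hratio0 hV]; ring
    _ ≤ u s * (∫ x in a..s, u x) ^ r :=
      mul_le_mul_of_nonneg_left (rpow_le_rpow (mul_nonneg hratio0 hV) hratio hr) (hu0 s)

/-- The solution of `ψ' = f - 2 h ψ` with `ψ a = 0`. -/
noncomputable def dampedIntegral (h f : ℝ → ℝ) (a t : ℝ) : ℝ :=
  ∫ s in a..t, exp (-2 * ∫ r in s..t, h r) * f s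

section dampedIntegral

variable {h f : ℝ → ℝ} {a : ℝ}

@[simp]
lemma dampedIntegral_self : dampedIntegral h f a a = 0 := intervalIntegral.integral_same

lemma dampedIntegral_nonneg (hf0 : ∀ s, 0 ≤ f s) {t : ℝ} (hat : a ≤ t) :
    0 ≤ dampedIntegral h f a t :=
  intervalIntegral.integral_nonneg hat fun s _ => mul_nonneg (exp_pos _).le (hf0 s)

lemma dampedIntegral_eq (hh : Continuous h) (t : ℝ) :
    dampedIntegral h f a t =
      exp (-2 * ∫ r in a..t, h r) * ∫ s in a..t, exp (2 * ∫ r in a..s, h r) * f s := by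
  rw [dampedIntegral, ← intervalIntegral.integral_const_mul]
  refine intervalIntegral.integral_congr fun s _ => ?_
  rw [← intervalIntegral.integral_interval_sub_left (hh.intervalIntegrable a t)
    (hh.intervalIntegrable a s), ← mul_assoc, ← exp_add]
  ring_nf

lemma hasDerivAt_dampedIntegral (hh : Continuous h) (hf : Continuous f) (t : ℝ) :
    HasDerivAt (dampedIntegral h f a) (f t - 2 * h t * dampedIntegral h f a t) t := by
  set H := fun s => ∫ r in a..s, h r
  have hH : ∀ s, HasDerivAt H (h s) s := fun s => (hh.integral_hasStrictDerivAt a s).hasDerivAt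
  have hHc : Continuous H := continuous_iff_continuousAt.2 fun s => (hH s).continuousAt
  have hW : HasDerivAt (fun s => ∫ r in a..s, exp (2 * H r) * f r) (exp (2 * H t) * f t) t :=
    (((continuous_const.mul hHc).rexp.mul hf).integral_hasStrictDerivAt a t).hasDerivAt
  have hexp : exp (-2 * H t) * exp (2 * H t) = 1 := by rw [← exp_add]; simp
  have hD : dampedIntegral h f a = fun s => exp (-2 * H s) * ∫ r in a..s, exp (2 * H r) * f r :=
    funext (dampedIntegral_eq hh)
  rw [hD]
  refine (((hH t).const_mul (-2)).exp.mul hW).congr_deriv ?_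
  linear_combination f t * hexp

lemma two_mul_mul_dampedIntegral_le (hh : Continuous h) (hh0 : ∀ s, 0 ≤ h s)
    (hh_anti : Antitone h) (hf : Continuous f) (hf0 : ∀ s, 0 ≤ f s) (hf_mono : Monotone f)
    {t : ℝ} (hat : a ≤ t) :
    2 * h t * dampedIntegral h f a t ≤ f t := by
  set E := fun s => exp (-2 * ∫ r in s..t, h r)
  have hE : ∀ s, HasDerivAt E (2 * h s * E s) s := fun s => by
    convert ((intervalIntegral.integral_hasDerivAt_left (hh.intervalIntegrable s t)
      (hh.stronglyMeasurableAtFilter _ _) hh.continuousAt).const_mul (-2)).exp using 1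
    ring
  have hEc : Continuous E := continuous_iff_continuousAt.2 fun s => (hE s).continuousAt
  have hkernel : ∫ s in a..t, 2 * h s * E s = 1 - E a := by
    rw [intervalIntegral.integral_eq_sub_of_hasDerivAt (fun s _ => hE s)
      (((continuous_const.mul hh).mul hEc).intervalIntegrable a t)]
    simp [E]
  calc 2 * h t * dampedIntegral h f a t = ∫ s in a..t, 2 * h t * (E s * f s) :=
        (intervalIntegral.integral_const_mul _ _).symm
    _ ≤ ∫ s in a..t, f t * (2 * h s * E s) := by
        refine intervalIntegral.integral_mono_on hat
          (((hEc.mul hf).intervalIntegrable a t).const_mul _)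
          ((((continuous_const.mul hh).mul hEc).intervalIntegrable a t).const_mul _) fun s hs => ?_
        have hprod : h t * f s ≤ h s * f t :=
          mul_le_mul (hh_anti hs.2) (hf_mono hs.2) (hf0 s) (hh0 s)
        have := mul_le_mul_of_nonneg_left hprod (by positivity : 0 ≤ 2 * E s)
        linarith
    _ = f t * (1 - E a) := by rw [intervalIntegral.integral_const_mul, hkernel]
    _ ≤ f t := mul_le_of_le_one_right (hf0 t) (sub_le_self _ (exp_pos _).le)

end dampedIntegral

lemma lyapunov_deriv_nonneg {p ψ F G f u h : ℝ} (hp : 1 ≤ p) (hψ : 0 ≤ ψ) (hF : 0 ≤ F)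
    (hG : 0 ≤ G) (hf : 0 ≤ f) (hA : 2 * h * ψ ≤ f) (hB : h * F ^ (p - 1) ≤ u * G ^ (p - 1)) :
    0 ≤ (f - 2 * h * ψ) * (p * F ^ (p - 1) + 2 * G ^ p)
      + ψ * (p * (f * (p - 1) * F ^ (p - 1 - 1)) + 2 * (u * p * G ^ (p - 1)))
      - f * p * F ^ (p - 1) := by
  have h1 : 0 ≤ 2 * p * ψ * (u * G ^ (p - 1) - h * F ^ (p - 1)) :=
    mul_nonneg (by positivity) (sub_nonneg.2 hB)
  have h2 : 0 ≤ 2 * (f - 2 * h * ψ) * G ^ p := mul_nonneg (by linarith) (rpow_nonneg hG _)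
  have h3 : 0 ≤ p * (p - 1) * ψ * F ^ (p - 1 - 1) * f := by
    have := rpow_nonneg hF (p - 1 - 1)
    have : 0 ≤ p - 1 := by linarith
    positivity
  linarith

theorem rpow_integral_le_dampedIntegral_mul_of_mul_rpow_le {p : ℝ} (hp : 1 ≤ p)
    {f u h : ℝ → ℝ} (hf : Continuous f) (hf0 : ∀ s, 0 < f s) (hf_mono : Monotone f)
    (hu : Continuous u) (hu0 : ∀ s, 0 ≤ u s)
    (hh : Continuous h) (hh0 : ∀ s, 0 ≤ h s) (hh_anti : Antitone h) {a t : ℝ}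
    (hhu : ∀ s, a ≤ s →
      h s * (∫ x in a..s, f x) ^ (p - 1) ≤ u s * (∫ x in a..s, u x) ^ (p - 1))
    (hat : a ≤ t) :
    (∫ s in a..t, f s) ^ p ≤
      dampedIntegral h f a t * (p * (∫ s in a..t, f s) ^ (p - 1) + 2 * (∫ s in a..t, u s) ^ p) := by
  set F := fun s => ∫ x in a..s, f x
  set G := fun s => ∫ x in a..s, u x
  set ψ := dampedIntegral h f a
  have hF : ∀ s, HasDerivAt F (f s) s := fun s => (hf.integral_hasStrictDerivAt a s).hasDerivAt
  have hG : ∀ s, HasDerivAt G (u s) s := fun s => (hu.integral_hasStrictDerivAt a s).hasDerivAt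
  have hψ : ∀ s, HasDerivAt ψ (f s - 2 * h s * ψ s) s := hasDerivAt_dampedIntegral hh hf
  have hFc : Continuous F := continuous_iff_continuousAt.2 fun s => (hF s).continuousAt
  have hGc : Continuous G := continuous_iff_continuousAt.2 fun s => (hG s).continuousAt
  have hψc : Continuous ψ := continuous_iff_continuousAt.2 fun s => (hψ s).continuousAt
  have hp0 : 0 ≤ p := zero_le_one.trans hp
  set Φ := fun s => ψ s * (p * F s ^ (p - 1) + 2 * G s ^ p) - F s ^ p
  have hΦc : Continuous Φ :=
    (hψc.mul (continuous_const.mul (hFc.rpow_const fun _ => Or.inr (sub_nonneg.2 hp))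
      |>.add (continuous_const.mul (hGc.rpow_const fun _ => Or.inr hp0)))).sub
      (hFc.rpow_const fun _ => Or.inr hp0)
  set Φ' := fun s => (f s - 2 * h s * ψ s) * (p * F s ^ (p - 1) + 2 * G s ^ p)
      + ψ s * (p * (f s * (p - 1) * F s ^ (p - 1 - 1)) + 2 * (u s * p * G s ^ (p - 1)))
      - f s * p * F s ^ (p - 1)
  have hΦ : ∀ s ∈ Ioo a t, HasDerivAt Φ (Φ' s) s := fun s hs => by
    have hFs : F s ≠ 0 :=
      (intervalIntegral.intervalIntegral_pos_of_pos (hf.intervalIntegrable a s) hf0 hs.1).ne'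
    exact ((hψ s).mul ((((hF s).rpow_const (Or.inl hFs)).const_mul p).add
      (((hG s).rpow_const (Or.inr hp)).const_mul 2))).sub ((hF s).rpow_const (Or.inl hFs))
  have hΦ' : ∀ s ∈ Ioo a t, 0 ≤ Φ' s := fun s hs =>
    lyapunov_deriv_nonneg hp (dampedIntegral_nonneg (fun s => (hf0 s).le) hs.1.le)
      (intervalIntegral.integral_nonneg hs.1.le fun x _ => (hf0 x).le)
      (intervalIntegral.integral_nonneg hs.1.le fun x _ => hu0 x) (hf0 s).le
      (two_mul_mul_dampedIntegral_le hh hh0 hh_anti hf (fun s => (hf0 s).le) hf_mono hs.1.le)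
      (hhu s hs.1.le)
  have hmono : MonotoneOn Φ (Icc a t) := by
    refine monotoneOn_of_hasDerivWithinAt_nonneg (f' := Φ') (convex_Icc a t) hΦc.continuousOn
      (fun s hs => ?_) (fun s hs => ?_) <;> rw [interior_Icc] at hs
    exacts [interior_Icc (a := a) ▸ (hΦ s hs).hasDerivWithinAt, hΦ' s hs]
  have hΦa : Φ a = 0 := by simp [Φ, F, G, ψ, zero_rpow (by linarith : p ≠ 0)]
  have hΦt := hmono (left_mem_Icc.2 hat) (right_mem_Icc.2 hat) hat
  simp only [Φ, hΦa] at hΦt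
  linarith

theorem rpow_integral_le_dampedIntegral_mul {p : ℝ} (hp : 1 ≤ p) {f u h : ℝ → ℝ}
    (hf : Continuous f) (hf0 : ∀ s, 0 < f s) (hf_mono : Monotone f)
    (hu : Continuous u) (hu0 : ∀ s, 0 ≤ u s) (hu_anti : Antitone u)
    (hh : ∀ s, h s = (u s / f s) ^ (p - 1) * u s) {a t : ℝ} (hat : a ≤ t) :
    (∫ s in a..t, f s) ^ p ≤
      dampedIntegral h f a t * (p * (∫ s in a..t, f s) ^ (p - 1) + 2 * (∫ s in a..t, u s) ^ p) := by
  have hp1 : 0 ≤ p - 1 := sub_nonneg.2 hp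
  have hratio0 : ∀ s, 0 ≤ u s / f s := fun s => div_nonneg (hu0 s) (hf0 s).le
  obtain rfl : h = fun s => (u s / f s) ^ (p - 1) * u s := funext hh
  refine rpow_integral_le_dampedIntegral_mul_of_mul_rpow_le hp hf hf0 hf_mono hu hu0
    (((hu.div hf fun s => (hf0 s).ne').rpow_const fun _ => Or.inr hp1).mul hu)
    (fun s => mul_nonneg (rpow_nonneg (hratio0 s) _) (hu0 s))
    (antitone_div_rpow_mul hp1 hu0 hu_anti hf0 hf_mono) (fun s has => ?_) hat
  exact div_rpow_mul_mul_integral_rpow_le has hp1 hu0 hu_anti hf0 hf_mono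
    (hu.intervalIntegrable a s) (hf.intervalIntegrable a s)

lemma half_mul_le_of_rpow_le {q F ψ X : ℝ} (hq : 0 < q) (hF : 0 < F)
    (h : F ^ (2 / q) ≤ ψ * (2 / q * F ^ (2 / q - 1) + 2 * X)) :
    q / 2 * F ≤ ψ * (1 + q * X / F ^ (2 / q - 1)) := by
  set P := F ^ (2 / q - 1) with hP_def
  have hP : 0 < P := rpow_pos_of_pos hF _
  have hsplit : F ^ (2 / q) = F * P := by rw [hP_def, rpow_sub_one hF.ne']; field_simp
  calc q / 2 * F = q / 2 * (F * P) / P := by field_simp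
    _ ≤ q / 2 * (ψ * (2 / q * P + 2 * X)) / P := by rw [← hsplit]; gcongr
    _ = ψ * (1 + q * X / P) := by field_simp

theorem stmt16_general (q : ℝ) (hq0 : 0 < q) (hq2 : q ≤ 2)
    (f g : ℝ → ℝ)
    (hf : Continuous f) (hfpos : ∀ t, 0 < f t) (hfmono : Monotone f)
    (hg : Continuous g) (hgmono : Monotone g)
    (h : ℝ → ℝ) (hh : ∀ t, h t = (max (-g t) 0 / f t) ^ (2 / q) * f t)
    (a : ℝ) :
    ∀ t, a ≤ t →
      (q / 2) * ∫ s in a..t, f s ≤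
        (∫ s in a..t, Real.exp (-2 * ∫ r in s..t, h r) * f s) *
          (1 + q * (∫ s in a..t, max (-g s) 0) ^ (2 / q) /
            (∫ s in a..t, f s) ^ (2 / q - 1)) := by
  intro t hat
  obtain rfl | hat := hat.eq_or_lt
  · simp
  have hu0 : ∀ s, 0 ≤ max (-g s) 0 := fun s => le_max_right _ _
  have hh' : ∀ s, h s = (max (-g s) 0 / f s) ^ (2 / q - 1) * max (-g s) 0 := fun s => by
    rw [hh, div_rpow_mul_eq_div_rpow_sub_one_mul _ (hu0 s) (hfpos s) (by positivity)]
  have key := rpow_integral_le_dampedIntegral_mul ((one_le_div hq0).2 hq2) hf hfpos hfmono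
    (hg.neg.max continuous_const) hu0
    (fun s s' hss' => max_le_max_right 0 (neg_le_neg (hgmono hss'))) hh' hat.le
  exact half_mul_le_of_rpow_le hq0
    (intervalIntegral.intervalIntegral_pos_of_pos (hf.intervalIntegrable a t) hfpos hat) key

theorem stmt16 (q : ℝ) (hq0 : 0 < q) (hq2 : q ≤ 2)
    (f g : ℝ → ℝ)
    (hf : Continuous f) (hfpos : ∀ t, 0 < f t) (hfmono : Monotone f)
    (hg : Continuous g) (hgmono : Monotone g) (hgnonpos : ∀ t, g t ≤ 0)
    (h : ℝ → ℝ) (hh : ∀ t, h t = (max (-g t) 0 / f t) ^ (2 / q) * f t)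
    (a : ℝ) :
    ∀ t, a ≤ t →
      (q / 2) * ∫ s in a..t, f s ≤
        (∫ s in a..t, Real.exp (-2 * ∫ r in s..t, h r) * f s) *
          (1 + q * (∫ s in a..t, max (-g s) 0) ^ (2 / q) /
            (∫ s in a..t, f s) ^ (2 / q - 1)) :=
  stmt16_general q hq0 hq2 f g hf hfpos hfmono hg hgmono h hh a
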